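/- arXiv:1806.00773 — 2 statements merged into one kernel-verified Lean document; each statement's English description precedes it below -/
import Mathlib

section
/- (Continuity of solution, Lemma 4.2 analogue) Suppose x : [0,∞) → ℝ satisfies x(t) = z(t) + q₀ + ∫₀ᵗ h(s,(x(s)−1)⁺)ds − ∫₀ᵗ G(t−s) da(s), where z is continuous, h is bounded on compacts and measurable, G is a continuous CDF, and a(t) = ∫₀ᵗ h(s,(x(s)−1)⁺)ds − (x(t)−1)⁺ + q₀ is nondecreasing. Then t ↦ ∫₀ᵗ G(t−s)da(s) is continuous, and hence x is continuous. -/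
/-!
A CDF `G` with `G 0 = 0` vanishes on `(-∞, 0]`, so for `t ≤ T` the integral of `G (t - s)` over
`(0, t]` equals the one over `(0, T]`: a parametric integral of a jointly continuous integrand over
a fixed bounded interval, hence continuous in `t`.

For `x` the difficulty is that `f s = h s (x s - 1)⁺` is not known to be measurable, so its
primitive `F` might be junk. But `F` is Lipschitz on the interval of times `t` with `f`
integrable on `(0, t]`, and equals `0` beyond it, so `F` is measurable anyway. The relation
`(x - 1)⁺ = F + q₀ - a` then makes `f` measurable, hence (being bounded) locally integrable,
and `x = z + q₀ + F - ∫ G (t - s) da(s)` is continuous.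
-/

open MeasureTheory intervalIntegral

open Set Filter

section Convolution

variable {E : Type*} [NormedAddCommGroup E] [NormedSpace ℝ E] {μ : Measure ℝ} {G : ℝ → E}

theorem setIntegral_Ioc_comp_sub_eq_of_le (hG : ∀ u ≤ 0, G u = 0) (a : ℝ) {t T : ℝ}
    (htT : t ≤ T) :
    ∫ s in Ioc a t, G (t - s) ∂μ = ∫ s in Ioc a T, G (t - s) ∂μ := by
  refine (setIntegral_eq_of_subset_of_forall_sdiff_eq_zero measurableSet_Ioc
    (Ioc_subset_Ioc_right htT) fun s hs => hG _ ?_).symm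
  exact sub_nonpos.2 (not_le.1 fun hst => hs.2 ⟨hs.1.1, hst⟩).le

theorem continuous_setIntegral_Ioc_comp_sub_const [IsLocallyFiniteMeasure μ] (hG : Continuous G)
    (a T : ℝ) : Continuous fun t => ∫ s in Ioc a T, G (t - s) ∂μ := by
  -- `(a, T]` is not compact: integrate over `[a, T]` against `μ` restricted to `(a, ∞)` instead.
  have hcont : Continuous (Function.uncurry fun t s : ℝ => G (t - s)) := by fun_prop
  have := continuous_parametric_integral_of_continuous (μ := μ.restrict (Ioi a)) hcont
    (isCompact_Icc (a := a) (b := T))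
  convert this using 2 with t
  rw [Measure.restrict_restrict measurableSet_Icc]
  congr 2
  ext s
  simp only [mem_Ioc, mem_inter_iff, mem_Icc, mem_Ioi]
  exact ⟨fun h => ⟨⟨h.1.le, h.2⟩, h.1⟩, fun h => ⟨h.2, h.1.2⟩⟩

theorem continuous_setIntegral_Ioc_comp_sub [IsLocallyFiniteMeasure μ] (hG : Continuous G)
    (hG_nonpos : ∀ u ≤ 0, G u = 0) (a : ℝ) :
    Continuous fun t => ∫ s in Ioc a t, G (t - s) ∂μ := by
  refine continuous_iff_continuousAt.2 fun t₀ => ?_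
  have hT := continuous_setIntegral_Ioc_comp_sub_const (μ := μ) hG a (t₀ + 1)
  refine hT.continuousAt.congr ?_
  filter_upwards [Iio_mem_nhds (lt_add_one t₀)] with t ht
  exact (setIntegral_Ioc_comp_sub_eq_of_le (μ := μ) hG_nonpos a ht.le).symm

end Convolution

section Primitive

variable {E : Type*} [NormedAddCommGroup E] {f : ℝ → E} {a b C : ℝ}

theorem isLowerSet_setOf_integrableOn_Ioc (f : ℝ → E) (μ : Measure ℝ) (a : ℝ) :
    IsLowerSet {t | IntegrableOn f (Ioc a t) μ} :=
  fun _ _ hts ht => ht.mono_set (Ioc_subset_Ioc_right hts)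

theorem lipschitzOnWith_primitive_of_norm_le [NormedSpace ℝ E]
    (hC : ∀ s ∈ Ioc a b, ‖f s‖ ≤ C) :
    LipschitzOnWith (Real.toNNReal C) (fun t => ∫ s in a..t, f s)
      ({t | IntegrableOn f (Ioc a t)} ∩ Icc a b) := by
  refine LipschitzOnWith.of_dist_le' fun t ht t' ht' => ?_
  have hint : ∀ u ∈ {t | IntegrableOn f (Ioc a t)} ∩ Icc a b,
      IntervalIntegrable f volume a u :=
    fun u hu => (intervalIntegrable_iff_integrableOn_Ioc_of_le hu.2.1).2 hu.1
  rw [dist_eq_norm, integral_interval_sub_left (hint t ht) (hint t' ht'), Real.dist_eq]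
  refine norm_integral_le_of_norm_le_const fun s hs => hC s ?_
  exact Ioc_subset_Ioc (le_min ht'.2.1 ht.2.1) (max_le ht'.2.2 ht.2.2) hs

theorem aemeasurable_primitive_of_norm_le [NormedSpace ℝ E] [MeasurableSpace E] [BorelSpace E]
    (hC : ∀ s ∈ Ioc a b, ‖f s‖ ≤ C) :
    AEMeasurable (fun t => ∫ s in a..t, f s) (volume.restrict (Ioc a b)) := by
  classical
  set S := {t | IntegrableOn f (Ioc a t)} ∩ Icc a b
  have hS : MeasurableSet S :=
    (isLowerSet_setOf_integrableOn_Ioc f volume a).ordConnected.measurableSet.inter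
      measurableSet_Icc
  refine (ContinuousOn.measurable_piecewise
    (lipschitzOnWith_primitive_of_norm_le hC).continuousOn (continuousOn_const (c := 0))
    hS).aemeasurable.congr ?_
  refine (ae_restrict_iff' measurableSet_Ioc).2 (Eventually.of_forall fun t ht => ?_)
  by_cases htS : t ∈ S
  · exact piecewise_eq_of_mem _ _ _ htS
  · have hnot : ¬IntegrableOn f (Ioc a t) := fun hint => htS ⟨hint, Ioc_subset_Icc_self ht⟩
    rw [piecewise_eq_of_notMem _ _ _ htS]
    exact (integral_of_le ht.1.le).trans (integral_undef hnot) |>.symm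

theorem continuousOn_primitive_Ici [NormedSpace ℝ E] (hf : ∀ b, IntegrableOn f (Ioc a b)) :
    ContinuousOn (fun t => ∫ s in a..t, f s) (Ici a) := by
  intro t (ht : a ≤ t)
  have hat : a ≤ t + 1 := by linarith
  have hcont : ContinuousOn (fun t => ∫ s in a..t, f s) (Icc a (t + 1)) := by
    rw [← uIcc_of_le hat]
    refine continuousOn_primitive_interval ?_
    rw [uIcc_of_le hat, integrableOn_Icc_iff_integrableOn_Ioc]
    exact hf _
  refine (hcont t ⟨ht, by linarith⟩).mono_of_mem_nhdsWithin ?_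
  exact mem_nhdsWithin.2
    ⟨Iio (t + 1), isOpen_Iio, lt_add_one t, fun s hs => ⟨hs.2, hs.1.le⟩⟩

end Primitive

theorem integrableOn_Ioc_of_eq_primitive_add {h : ℝ → ℝ → ℝ} {g ψ : ℝ → ℝ} {a b C : ℝ}
    (hh_meas : Measurable (Function.uncurry h)) (hh_bdd : ∀ s ∈ Ioc a b, ∀ y, |h s y| ≤ C)
    (hψ : AEMeasurable ψ (volume.restrict (Ioc a b)))
    (hg : ∀ s ∈ Ioc a b, g s = (∫ r in a..s, h r (g r)) + ψ s) :
    IntegrableOn (fun s => h s (g s)) (Ioc a b) := by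
  have hF := aemeasurable_primitive_of_norm_le (f := fun s => h s (g s))
    fun s hs => hh_bdd s hs (g s)
  have hg_meas : AEMeasurable g (volume.restrict (Ioc a b)) :=
    (hF.add hψ).congr <| (ae_restrict_iff' measurableSet_Ioc).2 <|
      Eventually.of_forall fun s hs => (hg s hs).symm
  refine ⟨(hh_meas.comp_aemeasurable (aemeasurable_id.prodMk hg_meas)).aestronglyMeasurable, ?_⟩
  refine .restrict_of_bounded (C := C) measure_Ioc_lt_top ?_
  exact (ae_restrict_iff' measurableSet_Ioc).2 (Eventually.of_forall fun s hs => hh_bdd s hs (g s))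

/-- Continuity of any solution of the key convolution equation: if `x`
satisfies `x(t) = z(t) + q₀ + ∫₀ᵗ h(s,(x(s)−1)⁺)ds − ∫₀ᵗ G(t−s) da(s)` where
`z` is continuous, `h` is measurable and bounded on compacts, `G` is a
continuous CDF and `a(t) = ∫₀ᵗ h(s,(x(s)−1)⁺)ds − (x(t)−1)⁺ + q₀` is
nondecreasing (a Stieltjes function), then `t ↦ ∫₀ᵗ G(t−s)da(s)` is
continuous, and hence `x` is continuous. -/
theorem solution_continuous
    (x z : ℝ → ℝ) (q₀ : ℝ) (h : ℝ → ℝ → ℝ) (G : ℝ → ℝ)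
    (A : StieltjesFunction ℝ)
    (hz : ContinuousOn z (Set.Ici 0))
    (hh_meas : Measurable (Function.uncurry h))
    (hh_bdd : ∀ K : ℝ, ∃ C : ℝ, ∀ s ∈ Set.Icc (0:ℝ) K, ∀ y : ℝ, |h s y| ≤ C)
    (hGcont : Continuous G) (hGmono : Monotone G)
    (hG0 : G 0 = 0) (hG01 : ∀ u, 0 ≤ G u ∧ G u ≤ 1)
    (hA : ∀ t, 0 ≤ t →
      A t = (∫ s in (0:ℝ)..t, h s (max (x s - 1) 0)) - max (x t - 1) 0 + q₀)
    (hx : ∀ t, 0 ≤ t →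
      x t = z t + q₀ + (∫ s in (0:ℝ)..t, h s (max (x s - 1) 0))
            - ∫ s in Set.Ioc (0:ℝ) t, G (t - s) ∂A.measure) :
    ContinuousOn (fun t => ∫ s in Set.Ioc (0:ℝ) t, G (t - s) ∂A.measure)
      (Set.Ici 0) ∧
    ContinuousOn x (Set.Ici 0) := by
  have hG_nonpos : ∀ u ≤ 0, G u = 0 := fun u hu => le_antisymm (hG0 ▸ hGmono hu) (hG01 u).1
  have hI : ContinuousOn (fun t => ∫ s in Ioc (0:ℝ) t, G (t - s) ∂A.measure) (Ici 0) :=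
    (continuous_setIntegral_Ioc_comp_sub hGcont hG_nonpos 0).continuousOn
  have hf_int : ∀ T, IntegrableOn (fun s => h s (max (x s - 1) 0)) (Ioc 0 T) := by
    intro T
    obtain ⟨C, hC⟩ := hh_bdd T
    refine integrableOn_Ioc_of_eq_primitive_add (ψ := fun s => q₀ - A s) hh_meas
      (fun s hs => hC s (Ioc_subset_Icc_self hs)) (A.mono.measurable.const_sub q₀).aemeasurable
      fun s hs => ?_
    linarith [hA s hs.1.le]
  refine ⟨hI, ?_⟩
  exact (((hz.add continuousOn_const).add (continuousOn_primitive_Ici hf_int)).sub hI).congr hx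
end

section
/- (Lemma A.3, queue upper bound) Suppose q : [0,∞) → ℝ₊ is continuous with q(0) = ∫₀^{ω₀} F^c(s)λ(−s)ds, and suppose for all 0 ≤ s ≤ t, q(t) − q(s) ≤ ∫_s^t H_u(q(u)) du where H_u(y) = λ(u) − ∫₀^{u+ω₀} f(x)λ(u−x)dx whenever y ≥ N_{F,u} := ∫₀^{u+ω₀}F^c(x)λ(u−x)dx, and H_u(y) ≤ λ(u) always. Then q(t) ≤ N_{F,t} = ∫₀^{t+ω₀} F^c(s)λ(t−s)ds for all t ≥ 0. -/
/-!
If `q` exceeded `N` at some time `t`, let `t₀` be the last time before `t` with `q ≤ N`. On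
`(t₀, t]` the queue is above `N`, so there `H` is `λ` minus the abandonment rate
`∫₀^{u+ω₀} f(x) λ(u - x) dx`. Writing `N` and that rate as causal convolutions and swapping
the order of integration (Fubini) gives `∫_{t₀}^t (λ - rate) = N t - N t₀`, hence
`q t - q t₀ ≤ N t - N t₀`, contradicting `q t₀ ≤ N t₀`.

If `F` vanishes on `[0, ∞)` the density `f` need not be integrable and the rate can be a junk
value; but then `N t - N s = ∫ₛᵗ λ`, and `H ≤ λ` suffices.
-/

open MeasureTheory intervalIntegral Set

theorem le_of_sub_le_sub_of_le_on_Ioc {q N : ℝ → ℝ} (hq : Continuous q) (hN : Continuous N)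
    (h₀ : q 0 ≤ N 0)
    (hinc : ∀ s t, 0 ≤ s → s ≤ t → (∀ u ∈ Ioc s t, N u ≤ q u) → q t - q s ≤ N t - N s)
    {t : ℝ} (ht : 0 ≤ t) : q t ≤ N t := by
  by_contra! hlt
  set S := Icc 0 t ∩ {s | q s ≤ N s}
  have hSbdd : BddAbove S := ⟨t, fun s hs => hs.1.2⟩
  obtain ⟨⟨hs₀, hst⟩, hqN⟩ :=
    (isClosed_Icc.inter (isClosed_le hq hN)).csSup_mem ⟨0, ⟨le_rfl, ht⟩, h₀⟩ hSbdd
  have hgap : ∀ u ∈ Ioc (sSup S) t, N u ≤ q u := fun u hu => by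
    by_contra! h
    exact (le_csSup hSbdd ⟨⟨hs₀.trans hu.1.le, hu.2⟩, h.le⟩).not_gt hu.1
  linarith [hinc _ t hs₀ hst hgap, show q (sSup S) ≤ N (sSup S) from hqN]

theorem intervalIntegral.integral_le_integral_of_le_of_nonneg {φ ψ : ℝ → ℝ} {a b : ℝ}
    (hab : a ≤ b) (hψ : IntervalIntegrable ψ volume a b) (hψ₀ : ∀ x ∈ Icc a b, 0 ≤ ψ x)
    (hφψ : ∀ x ∈ Icc a b, φ x ≤ ψ x) : ∫ x in a..b, φ x ≤ ∫ x in a..b, ψ x := by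
  by_cases hφ : IntervalIntegrable φ volume a b
  · exact integral_mono_on hab hφ hψ hφψ
  · rw [integral_undef hφ]
    exact integral_nonneg hab hψ₀

theorem intervalIntegral.integral_eq_of_eq_zero_on_Ioc {h : ℝ → ℝ} {a c t : ℝ} (hac : a ≤ c)
    (hct : c ≤ t) (hz : ∀ y ∈ Ioc c t, h y = 0) : ∫ y in a..t, h y = ∫ y in a..c, h y := by
  rw [integral_of_le (hac.trans hct), integral_of_le hac]
  exact setIntegral_eq_of_subset_of_forall_sdiff_eq_zero measurableSet_Ioc
    (Ioc_subset_Ioc_right hct) fun y hy => hz y ⟨not_le.1 fun h => hy.2 ⟨hy.1.1, h⟩, hy.1.2⟩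

theorem intervalIntegral.integral_mul_comp_sub (φ ψ : ℝ → ℝ) (c b : ℝ) :
    ∫ x in (0:ℝ)..(c + b), φ x * ψ (c - x) = ∫ y in -b..c, φ (c - y) * ψ y := by
  simpa using integral_comp_sub_left (fun y => φ (c - y) * ψ y) c (a := 0) (b := c + b)

theorem MeasureTheory.LocallyIntegrable.intervalIntegrable {E : Type*} [NormedAddCommGroup E]
    {f : ℝ → E} (hf : LocallyIntegrable f) (a b : ℝ) : IntervalIntegrable f volume a b :=
  (hf.integrableOn_isCompact isCompact_uIcc).intervalIntegrable

theorem intervalIntegrable_of_norm_le {E : Type*} [NormedAddCommGroup E] {g : ℝ → E} {C : ℝ}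
    (hg : AEStronglyMeasurable g) (hgC : ∀ y, ‖g y‖ ≤ C) (a b : ℝ) :
    IntervalIntegrable g volume a b :=
  intervalIntegrable_const.mono_fun hg.restrict
    (ae_of_all _ fun y => (hgC y).trans (Real.le_norm_self C))

section CausalConvolution

variable {f g : ℝ → ℝ} {C : ℝ}

theorem integrable_sub_mul_prod (hf : LocallyIntegrable f) (hg : AEStronglyMeasurable g)
    (hgC : ∀ y, ‖g y‖ ≤ C) (s t a b : ℝ) :
    Integrable (Function.uncurry fun u y => f (u - y) * g y)
      ((volume.restrict (Ioc s t)).prod (volume.restrict (Ioc a b))) := by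
  have hf₁ : Integrable ((Icc (s - b) (t - a)).indicator f) :=
    (integrable_indicator_iff measurableSet_Icc).2 (hf.integrableOn_isCompact isCompact_Icc)
  have hg₁ : Integrable ((Ioc a b).indicator g) :=
    (integrable_indicator_iff measurableSet_Ioc).2 (intervalIntegrable_of_norm_le hg hgC a b).1
  rw [Measure.prod_restrict]
  -- on the box the integrand only sees `f` on `[s - b, t - a]` and `g` on `(a, b]`
  refine (hg₁.convolution_integrand (ContinuousLinearMap.mul ℝ ℝ) hf₁).integrableOn.congr_fun
      ?_ (measurableSet_Ioc.prod measurableSet_Ioc)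
  rintro ⟨u, y⟩ ⟨hu, hy⟩
  have hdiff : u - y ∈ Icc (s - b) (t - a) :=
    ⟨by linarith [hu.1, hy.2], by linarith [hu.2, hy.1]⟩
  simp [indicator_of_mem hy, indicator_of_mem hdiff, mul_comm]

theorem integral_integral_sub_mul_swap (hf : LocallyIntegrable f) (hg : AEStronglyMeasurable g)
    (hgC : ∀ y, ‖g y‖ ≤ C) {s t a b : ℝ} (hst : s ≤ t) (hab : a ≤ b) :
    ∫ u in s..t, ∫ y in a..b, f (u - y) * g y = ∫ y in a..b, (∫ u in s..t, f (u - y)) * g y := by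
  simp only [integral_of_le hst, integral_of_le hab, ← MeasureTheory.integral_mul_const]
  exact integral_integral_swap (integrable_sub_mul_prod hf hg hgC s t a b)

theorem integral_sub_mul_eq_of_le (hf_neg : ∀ x < 0, f x = 0) {a u t : ℝ} (hau : a ≤ u)
    (hut : u ≤ t) : ∫ y in a..t, f (u - y) * g y = ∫ y in a..u, f (u - y) * g y :=
  integral_eq_of_eq_zero_on_Ioc hau hut fun y hy => by
    rw [hf_neg _ (by linarith [hy.1]), zero_mul]

theorem integral_primitive_eq_zero_of_nonpos (hf_neg : ∀ x < 0, f x = 0) {c : ℝ} (hc : c ≤ 0) :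
    ∫ x in 0..c, f x = 0 :=
  integral_zero_ae <| by
    filter_upwards [Measure.ae_ne volume 0] with x hx₀ hx
    rw [uIoc_of_ge hc] at hx
    exact hf_neg x (lt_of_le_of_ne hx.2 hx₀)

theorem intervalIntegrable_primitive_sub_mul (hf : LocallyIntegrable f)
    (hg : AEStronglyMeasurable g) (hgC : ∀ y, ‖g y‖ ≤ C) (c a b : ℝ) :
    IntervalIntegrable (fun y => (∫ x in 0..(c - y), f x) * g y) volume a b :=
  (intervalIntegrable_of_norm_le hg hgC a b).continuousOn_mul
    ((continuous_primitive hf.intervalIntegrable 0).comp (continuous_sub_left c)).continuousOn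

theorem intervalIntegrable_integral_sub_mul (hf : LocallyIntegrable f)
    (hf_neg : ∀ x < 0, f x = 0) (hg : AEStronglyMeasurable g) (hgC : ∀ y, ‖g y‖ ≤ C)
    {a s t : ℝ} (has : a ≤ s) (hst : s ≤ t) :
    IntervalIntegrable (fun u => ∫ y in a..u, f (u - y) * g y) volume s t := by
  rw [intervalIntegrable_iff_integrableOn_Ioc_of_le hst]
  refine IntegrableOn.congr_fun
    (integrable_sub_mul_prod hf hg hgC s t a t).integral_prod_left (fun u hu => ?_)
    measurableSet_Ioc
  simp only [Function.uncurry_apply_pair]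
  rw [← integral_of_le (has.trans hst),
    integral_sub_mul_eq_of_le hf_neg (has.trans hu.1.le) hu.2]

theorem integral_integral_sub_mul_eq (hf : LocallyIntegrable f) (hf_neg : ∀ x < 0, f x = 0)
    (hg : AEStronglyMeasurable g) (hgC : ∀ y, ‖g y‖ ≤ C) {a s t : ℝ} (has : a ≤ s)
    (hst : s ≤ t) :
    ∫ u in s..t, ∫ y in a..u, f (u - y) * g y =
      (∫ y in a..t, (∫ x in 0..(t - y), f x) * g y) -
        ∫ y in a..s, (∫ x in 0..(s - y), f x) * g y := by
  have hinner : ∀ y,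
      ∫ u in s..t, f (u - y) = (∫ x in 0..(t - y), f x) - ∫ x in 0..(s - y), f x := fun y => by
    rw [integral_comp_sub_right,
      integral_interval_sub_left (hf.intervalIntegrable _ _) (hf.intervalIntegrable _ _)]
  have htrunc : ∫ y in a..t, (∫ x in 0..(s - y), f x) * g y =
      ∫ y in a..s, (∫ x in 0..(s - y), f x) * g y :=
    integral_eq_of_eq_zero_on_Ioc has hst fun y hy => by
      rw [integral_primitive_eq_zero_of_nonpos hf_neg (by linarith [hy.1]), zero_mul]
  calc ∫ u in s..t, ∫ y in a..u, f (u - y) * g y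
      = ∫ u in s..t, ∫ y in a..t, f (u - y) * g y :=
        integral_congr fun u hu => by
          rw [uIcc_of_le hst] at hu
          exact (integral_sub_mul_eq_of_le hf_neg (has.trans hu.1) hu.2).symm
    _ = ∫ y in a..t, ((∫ x in 0..(t - y), f x) - ∫ x in 0..(s - y), f x) * g y := by
        rw [integral_integral_sub_mul_swap hf hg hgC hst (has.trans hst)]
        simp only [hinner]
    _ = _ := by
        simp only [sub_mul]
        rw [integral_sub (intervalIntegrable_primitive_sub_mul hf hg hgC _ _ _)
          (intervalIntegrable_primitive_sub_mul hf hg hgC _ _ _), htrunc]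

end CausalConvolution

theorem locallyIntegrable_of_primitive_ne_zero {F f : ℝ → ℝ} (hFmono : Monotone F)
    (hFdens : ∀ x, 0 ≤ x → F x = ∫ u in (0:ℝ)..x, f u) (hf_neg : ∀ x < 0, f x = 0) {x₀ : ℝ}
    (hx₀ : 0 ≤ x₀) (hFx₀ : F x₀ ≠ 0) : LocallyIntegrable f := by
  have hpos : ∀ b, x₀ ≤ b → IntegrableOn f (Icc 0 b) := fun b hb => by
    rw [← intervalIntegrable_iff_integrableOn_Icc_of_le (hx₀.trans hb)]
    by_contra hnot
    have hF0 : F 0 = 0 := by rw [hFdens 0 le_rfl, integral_same]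
    have hFb : F b = 0 := by rw [hFdens b (hx₀.trans hb), integral_undef hnot]
    exact hFx₀ (le_antisymm (hFb ▸ hFmono hb) (hF0 ▸ hFmono hx₀))
  have hneg : IntegrableOn f (Iio 0) :=
    integrableOn_zero.congr_fun (fun x hx => (hf_neg x hx).symm) measurableSet_Iio
  refine locallyIntegrable_iff.2 fun k hk => ?_
  refine (hneg.union (hpos (max (sSup k) x₀) (le_max_right _ _))).mono_set fun x hx => ?_
  rcases lt_or_ge x 0 with hx₀ | hx₀
  · exact Or.inl hx₀
  · exact Or.inr ⟨hx₀, (hk.isBounded.subset_Icc_sInf_sSup hx).2.trans (le_max_left _ _)⟩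

/-- `fluidLoad F lam ω₀ t` is the paper's `N_{F,t}`. -/
noncomputable def fluidLoad (F lam : ℝ → ℝ) (ω₀ t : ℝ) : ℝ :=
  ∫ x in (0:ℝ)..(t + ω₀), (1 - F x) * lam (t - x)

noncomputable def abandonmentRate (f lam : ℝ → ℝ) (ω₀ u : ℝ) : ℝ :=
  ∫ x in (0:ℝ)..(u + ω₀), f x * lam (u - x)

section FluidLoad

variable {F f lam : ℝ → ℝ} {ω₀ C s t : ℝ}

theorem fluidLoad_sub_fluidLoad (hf : LocallyIntegrable f) (hf_neg : ∀ x < 0, f x = 0)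
    (hFdens : ∀ x, 0 ≤ x → F x = ∫ u in (0:ℝ)..x, f u) (hlam : AEStronglyMeasurable lam)
    (hlamC : ∀ x, ‖lam x‖ ≤ C) (hs : -ω₀ ≤ s) (hst : s ≤ t) :
    fluidLoad F lam ω₀ t - fluidLoad F lam ω₀ s =
      ∫ u in s..t, (lam u - abandonmentRate f lam ω₀ u) := by
  have hlam_ii := intervalIntegrable_of_norm_le hlam hlamC
  have hload : ∀ c, -ω₀ ≤ c → fluidLoad F lam ω₀ c =
      (∫ y in -ω₀..c, lam y) - ∫ y in -ω₀..c, (∫ x in 0..(c - y), f x) * lam y := fun c hc => by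
    rw [fluidLoad, integral_mul_comp_sub,
      ← integral_sub (hlam_ii _ _) (intervalIntegrable_primitive_sub_mul hf hlam hlamC _ _ _)]
    refine integral_congr fun y hy => ?_
    rw [uIcc_of_le hc] at hy
    simp only [hFdens (c - y) (by linarith [hy.2]), sub_mul, one_mul]
  simp only [abandonmentRate, integral_mul_comp_sub]
  rw [integral_sub (hlam_ii s t)
      (intervalIntegrable_integral_sub_mul hf hf_neg hlam hlamC hs hst),
    integral_integral_sub_mul_eq hf hf_neg hlam hlamC hs hst, hload t (hs.trans hst), hload s hs,
    ← integral_add_adjacent_intervals (hlam_ii (-ω₀) s) (hlam_ii s t)]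
  ring

theorem fluidLoad_sub_fluidLoad_of_eq_zero (hF : ∀ x, 0 ≤ x → F x = 0)
    (hlam : ∀ a b, IntervalIntegrable lam volume a b) (hs : -ω₀ ≤ s) (hst : s ≤ t) :
    fluidLoad F lam ω₀ t - fluidLoad F lam ω₀ s = ∫ u in s..t, lam u := by
  have hload : ∀ c, -ω₀ ≤ c → fluidLoad F lam ω₀ c = ∫ y in -ω₀..c, lam y := fun c hc => by
    rw [fluidLoad, integral_mul_comp_sub]
    refine integral_congr fun y hy => ?_
    rw [uIcc_of_le hc] at hy
    simp only [hF (c - y) (by linarith [hy.2]), sub_zero, one_mul]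
  rw [hload t (hs.trans hst), hload s hs,
    ← integral_add_adjacent_intervals (hlam (-ω₀) s) (hlam s t)]
  ring

end FluidLoad

theorem queue_upper_bound_general
    (F f lam : ℝ → ℝ) (ω₀ : ℝ) (hω₀ : 0 ≤ ω₀)
    (hFmono : Monotone F)
    (hFdens : ∀ x, 0 ≤ x → F x = ∫ u in (0:ℝ)..x, f u)
    (hf_neg : ∀ x < (0:ℝ), f x = 0)
    (hlam : ∀ x, 0 ≤ lam x) (hlam_meas : Measurable lam)
    (hlam_bdd : ∃ C, ∀ x, lam x ≤ C)
    (N : ℝ → ℝ)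
    (hN : ∀ u, N u = ∫ x in (0:ℝ)..(u + ω₀), (1 - F x) * lam (u - x))
    (hNcont : Continuous N)
    (H : ℝ → ℝ → ℝ)
    (hH_above : ∀ u, 0 ≤ u → ∀ y, N u ≤ y →
      H u y = lam u - ∫ x in (0:ℝ)..(u + ω₀), f x * lam (u - x))
    (hH_le : ∀ u y, H u y ≤ lam u)
    (q : ℝ → ℝ) (hqcont : Continuous q)
    (hq0 : q 0 = ∫ s in (0:ℝ)..ω₀, (1 - F s) * lam (-s))
    (hgrowth : ∀ s t, 0 ≤ s → s ≤ t → q t - q s ≤ ∫ u in s..t, H u (q u)) :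
    ∀ t, 0 ≤ t → q t ≤ N t := by
  obtain ⟨C, hC⟩ := hlam_bdd
  have hlamC : ∀ x, ‖lam x‖ ≤ C := fun x => (Real.norm_of_nonneg (hlam x)).trans_le (hC x)
  have hlam_ii := intervalIntegrable_of_norm_le hlam_meas.aestronglyMeasurable hlamC
  obtain rfl : N = fluidLoad F lam ω₀ := funext hN
  have hq0N : q 0 ≤ fluidLoad F lam ω₀ 0 := by simp [hq0, fluidLoad]
  refine fun _ => le_of_sub_le_sub_of_le_on_Ioc hqcont hNcont hq0N
    fun s t hs hst hqN => (hgrowth s t hs hst).trans ?_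
  have hs' : -ω₀ ≤ s := by linarith
  by_cases hF : ∃ x₀, 0 ≤ x₀ ∧ F x₀ ≠ 0
  · obtain ⟨x₀, hx₀, hFx₀⟩ := hF
    have hf := locallyIntegrable_of_primitive_ne_zero hFmono hFdens hf_neg hx₀ hFx₀
    rw [fluidLoad_sub_fluidLoad hf hf_neg hFdens hlam_meas.aestronglyMeasurable hlamC hs' hst]
    refine (intervalIntegral.integral_congr_ae (ae_of_all _ fun u hu => ?_)).le
    rw [uIoc_of_le hst] at hu
    exact hH_above u (hs.trans hu.1.le) _ (hqN u hu)
  · push Not at hF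
    rw [fluidLoad_sub_fluidLoad_of_eq_zero hF hlam_ii hs' hst]
    exact integral_le_integral_of_le_of_nonneg hst (hlam_ii s t) (fun u _ => hlam u)
      fun u _ => hH_le u (q u)

/-- Lemma A.3 (queue upper bound): under the stated structure of the rate
function `H`, any continuous `q` starting from
`q(0) = ∫₀^{ω₀} F^c(s)λ(−s)ds` and satisfying
`q(t) − q(s) ≤ ∫ₛᵗ H_u(q(u))du` stays below
`N_{F,t} = ∫₀^{t+ω₀} F^c(s)λ(t−s)ds`. -/
theorem queue_upper_bound
    (F f lam : ℝ → ℝ) (ω₀ : ℝ) (hω₀ : 0 ≤ ω₀)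
    (hFmono : Monotone F) (hF01 : ∀ x, 0 ≤ F x ∧ F x ≤ 1)
    (hFdens : ∀ x, 0 ≤ x → F x = ∫ u in (0:ℝ)..x, f u)
    (hfpos : ∀ x, 0 ≤ f x) (hf_neg : ∀ x < (0:ℝ), f x = 0)
    (hlam : ∀ x, 0 ≤ lam x) (hlam_meas : Measurable lam)
    (hlam_bdd : ∃ C, ∀ x, lam x ≤ C)
    (N : ℝ → ℝ)
    (hN : ∀ u, N u = ∫ x in (0:ℝ)..(u + ω₀), (1 - F x) * lam (u - x))
    (hNcont : Continuous N)
    (H : ℝ → ℝ → ℝ)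
    (hH_above : ∀ u, 0 ≤ u → ∀ y, N u ≤ y →
      H u y = lam u - ∫ x in (0:ℝ)..(u + ω₀), f x * lam (u - x))
    (hH_le : ∀ u y, H u y ≤ lam u)
    (q : ℝ → ℝ) (hqcont : Continuous q) (hqpos : ∀ t, 0 ≤ q t)
    (hq0 : q 0 = ∫ s in (0:ℝ)..ω₀, (1 - F s) * lam (-s))
    (hgrowth : ∀ s t, 0 ≤ s → s ≤ t → q t - q s ≤ ∫ u in s..t, H u (q u)) :
    ∀ t, 0 ≤ t → q t ≤ N t :=
  queue_upper_bound_general F f lam ω₀ hω₀ hFmono hFdens hf_neg hlam hlam_meas hlam_bdd N hN hNcont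
    H hH_above hH_le q hqcont hq0 hgrowth
end
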